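/- arXiv:2207.14039 — 3 statements merged into one kernel-verified Lean document; each statement's English description precedes it below -/
import Mathlib

section
/- Let G ∈ ℝ^{r×r} be a nonnegative matrix and Y ∈ ℝ^{p×r} a matrix with nonzero columns whose first block of rows is entrywise nonnegative, satisfying Y(I_r − G) = 0. If no column Y(:,j) can be written as a nonnegative linear combination of the other columns of Y, then G = I_r. -/
open scoped BigOperators

/-- Let `G ∈ ℝ^{r×r}` be nonnegative and `Y ∈ ℝ^{p×r}` have nonzero
columns, with its first `m` rows entrywise nonnegative (and, as in the context, no
column of this top block identically zero), satisfying `Y (I − G) = 0`.  If no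
column of `Y` is a nonnegative linear combination of the other columns of `Y`, then
`G = I`. -/
theorem stmt7 (p r m : ℕ) (G : Matrix (Fin r) (Fin r) ℝ) (Y : Matrix (Fin p) (Fin r) ℝ)
    (hG : ∀ i j, 0 ≤ G i j)
    (htop : ∀ (i : Fin p) (j : Fin r), (i : ℕ) < m → 0 ≤ Y i j)
    (htopnz : ∀ j : Fin r, ∃ i : Fin p, (i : ℕ) < m ∧ Y i j ≠ 0)
    (hcols : ∀ j : Fin r, (fun i => Y i j) ≠ 0)
    (hYG : Y * (1 - G) = 0)
    (hmin : ∀ j : Fin r, ¬ ∃ c : Fin r → ℝ,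
      (∀ i, 0 ≤ c i) ∧ c j = 0 ∧ ∀ a, Y a j = ∑ i, c i * Y a i) :
    G = 1 := by
  have key : ∀ (a : Fin p) (j : Fin r), Y a j = ∑ i, Y a i * G i j := by
    intro a j
    have h := congrFun (congrFun hYG a) j
    simp only [Matrix.mul_apply, Matrix.sub_apply, Matrix.one_apply, Matrix.zero_apply,
      mul_sub, Finset.sum_sub_distrib, mul_ite, mul_one, mul_zero,
      Finset.sum_ite_eq', Finset.mem_univ, if_true, sub_eq_zero] at h
    exact h
  have key2 : ∀ (a : Fin p) (j : Fin r),
      (1 - G j j) * Y a j = ∑ i ∈ Finset.univ.erase j, Y a i * G i j := by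
    intro a j
    have h := key a j
    rw [← Finset.add_sum_erase _ _ (Finset.mem_univ j)] at h
    linear_combination h
  have hdiag : ∀ j, G j j = 1 := by
    intro j
    by_contra hne
    rcases lt_or_gt_of_ne hne with hlt | hgt
    · -- G j j < 1 : contradict hmin
      apply hmin j
      refine ⟨fun i => if i = j then 0 else G i j / (1 - G j j), ?_, by simp, ?_⟩
      · intro i
        by_cases hij : i = j
        · simp [hij]
        · simp only [hij, if_false]
          exact div_nonneg (hG i j) (by linarith)
      · intro a
        have h2 := key2 a j
        have hpos : (1 - G j j) ≠ 0 := by linarith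
        rw [← Finset.add_sum_erase _ _ (Finset.mem_univ j)]
        simp only [if_pos rfl, zero_mul, zero_add]
        rw [Finset.sum_congr rfl (fun i hi => by
          rw [if_neg (Finset.ne_of_mem_erase hi)])]
        have : ∑ i ∈ Finset.univ.erase j, G i j / (1 - G j j) * Y a i
            = (∑ i ∈ Finset.univ.erase j, Y a i * G i j) / (1 - G j j) := by
          rw [Finset.sum_div]
          exact Finset.sum_congr rfl (fun i _ => by ring)
        rw [this, ← h2, mul_div_cancel_left₀ _ hpos]
        simp
    · -- G j j > 1 : contradiction via top block
      obtain ⟨a, ham, haz⟩ := htopnz j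
      have hya : 0 < Y a j := lt_of_le_of_ne (htop a j ham) (Ne.symm haz)
      have h2 := key2 a j
      have hlhs : (1 - G j j) * Y a j < 0 :=
        mul_neg_of_neg_of_pos (by linarith) hya
      have hrhs : 0 ≤ ∑ i ∈ Finset.univ.erase j, Y a i * G i j :=
        Finset.sum_nonneg fun i hi => mul_nonneg (htop a i ham) (hG i j)
      linarith
  have hoff : ∀ i j : Fin r, i ≠ j → G i j = 0 := by
    intro i j hij
    obtain ⟨a, ham, haz⟩ := htopnz i
    have hya : 0 < Y a i := lt_of_le_of_ne (htop a i ham) (Ne.symm haz)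
    have h2 := key2 a j
    rw [hdiag j] at h2
    simp only [sub_self, zero_mul] at h2
    have hterm : Y a i * G i j = 0 := by
      have := (Finset.sum_eq_zero_iff_of_nonneg
        (fun k hk => mul_nonneg (htop a k ham) (hG k j))).mp h2.symm i
        (Finset.mem_erase.mpr ⟨hij, Finset.mem_univ i⟩)
      exact this
    rcases mul_eq_zero.mp hterm with h | h
    · exact absurd h (ne_of_gt hya)
    · exact h
  ext i j
  by_cases hij : i = j
  · subst hij; simp [Matrix.one_apply, hdiag i]
  · simp [Matrix.one_apply, hij, hoff i j hij]
end

section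
/- (Correctness of quaternion SPA in the noiseless case) Let M ∈ ℍ_S^{m×n} be an r-separable quaternion matrix, M = W[I_r, U]Π with W = M(:,K), U ∈ ℝ^{r×t}₊, Π a permutation, and suppose rank(mat(M)) = r. Then the quaternion successive projection algorithm — which normalizes each column m_j by ‖S₀(m_j)‖₁, and then r times repeats: select the column of largest ℓ2 norm (in ℝ^{4m}) and project all columns onto the orthogonal complement of the selected column — identifies exactly the index set K (up to ties among duplicated pure columns), and after r steps the residual matrix is zero. -/
/-!
Normalising a column by the ℓ¹ norm of its real part is linear on the cone `ℍ_S`, so after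
normalisation every column is a sub-convex combination `∑ θ_s v_s` (`θ ≥ 0`, `∑ θ_s ≤ 1`) of the
normalised pure columns `v_s`, which are linearly independent since `rank (mat M) = r`. Projections
are linear, so the residuals keep this structure with the same weights. If `u = ∑ θ_s v_s` has
maximal norm, then `‖u‖² = ∑ θ_s ⟪u, v_s⟫ ≤ (∑ θ_s) ‖u‖² ≤ ‖u‖²` forces `v_s = u` whenever
`θ_s ≠ 0`; linear independence of the surviving pure residuals then makes `θ` a unit vector. So
each step selects a copy of a surviving pure column, projection kills it, and the other pure
residuals stay linearly independent. After `r` steps all pure residuals, hence all residuals,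
vanish.
-/

open scoped RealInnerProductSpace

noncomputable def qcomp : Fin 4 → Quaternion ℝ → ℝ := fun l q => ![q.re, q.imI, q.imJ, q.imK] l

section InnerProductSpace

variable {E : Type*} [NormedAddCommGroup E] [InnerProductSpace ℝ E] {ι : Type*} {v : ι → E}

theorem LinearIndepOn.starProjection_orthogonal_singleton {A : Set ι} (hv : LinearIndepOn ℝ v A)
    {s : ι} (hs : s ∈ A) :
    LinearIndepOn ℝ (fun i => (ℝ ∙ v s)ᗮ.starProjection (v i)) (A \ {s}) := by
  refine LinearIndependent.map (hv.mono Set.sdiff_subset) ?_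
  rw [Submodule.ker_starProjection, Submodule.orthogonal_orthogonal,
    ← Set.image_eq_range, Submodule.disjoint_span_singleton' (hv.ne_zero hs)]
  exact hv.notMem_span hs

variable [Fintype ι] {θ : ι → ℝ}

theorem eq_sum_smul_of_norm_le_sum_smul (hθ : ∀ s, 0 ≤ θ s) (hθ1 : ∑ s, θ s ≤ 1)
    (hmax : ∀ s, ‖v s‖ ≤ ‖∑ s, θ s • v s‖) {s : ι} (hs : θ s ≠ 0) :
    v s = ∑ s, θ s • v s := by
  set u := ∑ s, θ s • v s
  have hinner_le : ∀ s, ⟪u, v s⟫ ≤ ‖u‖ ^ 2 := fun s =>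
    (real_inner_le_norm _ _).trans (by rw [sq]; gcongr; exact hmax s)
  have hdefect : ∀ s, 0 ≤ θ s * (‖u‖ ^ 2 - ⟪u, v s⟫) := fun s =>
    mul_nonneg (hθ s) (sub_nonneg.2 (hinner_le s))
  -- the defects sum to `(∑ θ) ‖u‖² - ⟪u, u⟫ ≤ 0`, so each of them vanishes
  have hsum : ∑ s, θ s * (‖u‖ ^ 2 - ⟪u, v s⟫) ≤ 0 := by
    have hu : ‖u‖ ^ 2 = ∑ s, θ s * ⟪u, v s⟫ := by
      rw [← real_inner_self_eq_norm_sq]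
      exact (inner_sum _ _ _).trans (by simp only [inner_smul_right])
    simp only [mul_sub, Finset.sum_sub_distrib, ← Finset.sum_mul, ← hu]
    nlinarith [sq_nonneg ‖u‖]
  have hzero := (Finset.sum_eq_zero_iff_of_nonneg fun s _ => hdefect s).1
    (le_antisymm hsum (Finset.sum_nonneg fun s _ => hdefect s)) s (Finset.mem_univ s)
  have hinner : ⟪u, v s⟫ = ‖u‖ ^ 2 := by
    rcases mul_eq_zero.1 hzero with h | h
    · exact absurd h hs
    · linarith
  have hdist : ‖v s - u‖ ^ 2 ≤ 0 := by
    rw [norm_sub_sq_real, real_inner_comm, hinner]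
    nlinarith [hmax s, norm_nonneg (v s)]
  exact sub_eq_zero.1 (norm_eq_zero.1 (pow_eq_zero_iff two_ne_zero |>.1
    (le_antisymm hdist (sq_nonneg _))))

theorem exists_eq_single_of_norm_le_sum_smul [DecidableEq ι] {A : Set ι}
    (hv : LinearIndepOn ℝ v A) (hvA : ∀ s ∉ A, v s = 0) (hθ : ∀ s, 0 ≤ θ s)
    (hθ1 : ∑ s, θ s ≤ 1) (hmax : ∀ s, ‖v s‖ ≤ ‖∑ s, θ s • v s‖) (hu : ∑ s, θ s • v s ≠ 0) :
    ∃ s ∈ A, θ = Pi.single s 1 := by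
  have heq := fun s => eq_sum_smul_of_norm_le_sum_smul hθ hθ1 hmax (s := s)
  have hmem : ∀ s, θ s ≠ 0 → s ∈ A := fun s hs => by
    by_contra h
    exact hu ((heq s hs).symm.trans (hvA s h))
  obtain ⟨s, hs⟩ : ∃ s, θ s ≠ 0 := by
    by_contra! h
    exact hu (by simp [h])
  have hother : ∀ s', s' ≠ s → θ s' = 0 := fun s' hne => by
    by_contra h
    exact hne (hv.injOn (hmem s' h) (hmem s hs) ((heq s' h).trans (heq s hs).symm))
  have hsum : ∑ s, θ s • v s = θ s • v s :=
    Finset.sum_eq_single s (fun s' _ hne => by rw [hother s' hne, zero_smul]) (by simp)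
  have hone : θ s = 1 := by
    have hvs : v s ≠ 0 := fun h => hu ((heq s hs).symm.trans h)
    refine smul_left_injective ℝ hvs ?_
    simp only [one_smul]
    exact (hsum.symm.trans (heq s hs).symm)
  refine ⟨s, hmem s hs, funext fun s' => ?_⟩
  rcases eq_or_ne s' s with rfl | hne
  · simp [hone]
  · simp [hother s' hne, hne]

theorem exists_single_linearIndepOn_starProjection [DecidableEq ι] {A : Finset ι}
    (hv : LinearIndepOn ℝ v A) (hvA : ∀ s ∉ A, v s = 0) (hA : A.Nonempty) (hθ : ∀ s, 0 ≤ θ s)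
    (hθ1 : ∑ s, θ s ≤ 1) (hmax : ∀ s, ‖v s‖ ≤ ‖∑ s, θ s • v s‖) :
    ∃ s ∈ A, θ = Pi.single s 1 ∧ (∀ i ∉ A.erase s, (ℝ ∙ v s)ᗮ.starProjection (v i) = 0) ∧
      LinearIndepOn ℝ (fun i => (ℝ ∙ v s)ᗮ.starProjection (v i)) (A.erase s) := by
  obtain ⟨s₁, hs₁⟩ := hA
  have hu : ∑ s, θ s • v s ≠ 0 := fun h =>
    hv.ne_zero hs₁ (norm_eq_zero.1 (le_antisymm ((hmax s₁).trans_eq (by rw [h, norm_zero]))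
      (norm_nonneg _)))
  obtain ⟨s, hs, rfl⟩ := exists_eq_single_of_norm_le_sum_smul hv hvA hθ hθ1 hmax hu
  refine ⟨s, hs, rfl, fun i hi => ?_, ?_⟩
  · rcases eq_or_ne i s with rfl | hne
    · exact Submodule.starProjection_orthogonalComplement_singleton_eq_zero _
    · rw [hvA i fun h => hi (Finset.mem_erase.2 ⟨hne, h⟩), map_zero]
  · rw [Finset.coe_erase]
    exact hv.starProjection_orthogonal_singleton hs

end InnerProductSpace

section SuccessiveProjection

variable {E : Type*} [NormedAddCommGroup E] [InnerProductSpace ℝ E] {ι : Type*} {r : ℕ}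
  {K : Fin r → ι} {θ : ι → Fin r → ℝ} {z : Fin (r + 1) → ι → E} {k : Fin r → ι}

theorem spa_eq_sum_smul (hz0 : ∀ j, z 0 j = ∑ s, θ j s • z 0 (K s))
    (hstep : ∀ t j, z t.succ j = (ℝ ∙ z t.castSucc (k t))ᗮ.starProjection (z t.castSucc j)) :
    ∀ t j, z t j = ∑ s, θ j s • z t (K s) := by
  intro t
  induction t using Fin.induction with
  | zero => exact hz0
  | succ t ih =>
    intro j
    rw [hstep, ih j, map_sum]
    simp only [map_smul, hstep]

theorem spa_invariant (hθ : ∀ j s, 0 ≤ θ j s) (hθ1 : ∀ j, ∑ s, θ j s ≤ 1)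
    (hz0 : ∀ j, z 0 j = ∑ s, θ j s • z 0 (K s)) (hli : LinearIndependent ℝ (z 0 ∘ K))
    (hmax : ∀ t j, ‖z t.castSucc j‖ ≤ ‖z t.castSucc (k t)‖)
    (hstep : ∀ t j, z t.succ j = (ℝ ∙ z t.castSucc (k t))ᗮ.starProjection (z t.castSucc j)) :
    ∀ t : Fin (r + 1), ∃ R : Finset (Fin r), R.card + t = r ∧ (∀ s ∉ R, z t (K s) = 0) ∧
      LinearIndepOn ℝ (z t ∘ K) R ∧
      (∀ t' : Fin r, t'.castSucc < t → ∃ s, θ (k t') = Pi.single s 1) ∧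
      ∀ s ∉ R, ∃ t', θ (k t') = Pi.single s 1 := by
  have hsum := spa_eq_sum_smul hz0 hstep
  intro t
  induction t using Fin.induction with
  | zero =>
    refine ⟨Finset.univ, by simp, by simp, ?_, fun t' h => absurd h (Fin.not_lt_zero _), by simp⟩
    rw [Finset.coe_univ, linearIndepOn_univ_iff]
    exact hli
  | succ t ih =>
    obtain ⟨R, hcard, hzero, hliR, hhit, hcover⟩ := ih
    rw [Fin.val_castSucc] at hcard
    have hR : R.Nonempty := Finset.card_pos.1 (by have := t.isLt; omega)
    obtain ⟨s, hs, hθs, hzero', hliR'⟩ := exists_single_linearIndepOn_starProjection hliR hzero hR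
      (hθ (k t)) (hθ1 (k t)) fun s => (hsum t.castSucc (k t)).symm ▸ hmax t (K s)
    have hu : z t.castSucc (k t) = z t.castSucc (K s) := by
      rw [hsum t.castSucc (k t), hθs]
      simp [Pi.single_apply]
    have hproj : z t.succ ∘ K =
        fun i => (ℝ ∙ z t.castSucc (K s))ᗮ.starProjection (z t.castSucc (K i)) := by
      funext i
      rw [Function.comp_apply, hstep, hu]
    refine ⟨R.erase s, ?_, fun i hi => (congrFun hproj i).trans (hzero' i hi), hproj ▸ hliR',
      ?_, ?_⟩
    · rw [Finset.card_erase_of_mem hs, Fin.val_succ]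
      have := Finset.card_pos.2 hR
      omega
    · intro t' ht'
      rcases (Fin.castSucc_lt_succ_iff.1 ht').lt_or_eq with h | rfl
      · exact hhit t' (Fin.castSucc_lt_castSucc_iff.2 h)
      · exact ⟨s, hθs⟩
    · intro i hi
      rcases eq_or_ne i s with rfl | hne
      · exact ⟨t, hθs⟩
      · exact hcover i fun h => hi (Finset.mem_erase.2 ⟨hne, h⟩)

theorem spa_correct (hθ : ∀ j s, 0 ≤ θ j s) (hθ1 : ∀ j, ∑ s, θ j s ≤ 1)
    (hz0 : ∀ j, z 0 j = ∑ s, θ j s • z 0 (K s)) (hli : LinearIndependent ℝ (z 0 ∘ K))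
    (hmax : ∀ t j, ‖z t.castSucc j‖ ≤ ‖z t.castSucc (k t)‖)
    (hstep : ∀ t j, z t.succ j = (ℝ ∙ z t.castSucc (k t))ᗮ.starProjection (z t.castSucc j)) :
    (∃ σ : Fin r → Fin r, Function.Bijective σ ∧ ∀ t, θ (k t) = Pi.single (σ t) 1) ∧
      z (Fin.last r) = 0 := by
  obtain ⟨R, hcard, hzero, -, hhit, hcover⟩ :=
    spa_invariant hθ hθ1 hz0 hli hmax hstep (Fin.last r)
  have hR : R = ∅ := Finset.card_eq_zero.1 (by rw [Fin.val_last] at hcard; omega)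
  subst hR
  choose σ hσ using fun t => hhit t (Fin.castSucc_lt_last t)
  have hsurj : Function.Surjective σ := fun s => by
    obtain ⟨t, ht⟩ := hcover s (Finset.notMem_empty s)
    refine ⟨t, ?_⟩
    have := congrFun ((hσ t).symm.trans ht) s
    by_contra hne
    simp [hne] at this
  refine ⟨⟨σ, ⟨Finite.injective_iff_surjective.2 hsurj, hsurj⟩, hσ⟩, ?_⟩
  funext j
  rw [spa_eq_sum_smul hz0 hstep, Pi.zero_apply]
  exact Finset.sum_eq_zero fun s _ => by rw [hzero s (Finset.notMem_empty s), smul_zero]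

end SuccessiveProjection

theorem LinearIndependent.comp_of_finrank_span_eq {K V ι κ : Type*} [Field K] [AddCommGroup V]
    [Module K V] [Fintype κ] {v : ι → V} {f : κ → ι}
    (hspan : ∀ j, v j ∈ Submodule.span K (Set.range (v ∘ f)))
    (hrank : Module.finrank K (Submodule.span K (Set.range v)) = Fintype.card κ) :
    LinearIndependent K (v ∘ f) := by
  have : Submodule.span K (Set.range (v ∘ f)) = Submodule.span K (Set.range v) :=
    le_antisymm (Submodule.span_mono (Set.range_comp_subset_range f v))
      (Submodule.span_le.2 (Set.range_subset_iff.2 hspan))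
  rw [linearIndependent_iff_card_eq_finrank_span, ← hrank, Set.finrank, this]

theorem inv_smul_eq_sum_smul_inv_smul {V ι κ : Type*} [AddCommGroup V] [Module ℝ V] [Fintype κ]
    {c : ι → V} {N : ι → ℝ} {H : κ → ι → ℝ} {f : κ → ι} (hc : ∀ j, c j = ∑ s, H s j • c (f s))
    (hN : ∀ s, N (f s) ≠ 0) (j : ι) :
    (N j)⁻¹ • c j = ∑ s, ((N j)⁻¹ * H s j * N (f s)) • ((N (f s))⁻¹ • c (f s)) := by
  rw [hc j, Finset.smul_sum]
  refine Finset.sum_congr rfl fun s _ => ?_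
  rw [smul_smul, smul_smul, mul_assoc, mul_assoc, mul_inv_cancel₀ (hN s), mul_one]

section Euclidean

variable {κ : Type*} [Fintype κ]

theorem EuclideanSpace.inner_toLp_toLp_eq_sum_mul (x y : κ → ℝ) :
    ⟪WithLp.toLp 2 x, WithLp.toLp 2 y⟫ = ∑ a, x a * y a := by
  simp [EuclideanSpace.inner_toLp_toLp, dotProduct, mul_comm]

theorem EuclideanSpace.starProjection_orthogonal_singleton_toLp (u x : κ → ℝ) :
    (ℝ ∙ WithLp.toLp 2 u)ᗮ.starProjection (WithLp.toLp 2 x) =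
      WithLp.toLp 2 (fun a => x a - (∑ b, u b * x b) / (∑ b, u b ^ 2) * u a) := by
  rw [Submodule.starProjection_orthogonal_val, Submodule.starProjection_singleton,
    EuclideanSpace.real_norm_sq_eq, inner_toLp_toLp_eq_sum_mul]
  rfl

end Euclidean

noncomputable def qcompₗ (l : Fin 4) : Quaternion ℝ →ₗ[ℝ] ℝ where
  toFun := qcomp l
  map_add' p q := by fin_cases l <;> simp [qcomp]
  map_smul' c q := by fin_cases l <;> simp [qcomp]

theorem qcomp_sum_smul {κ : Type*} (T : Finset κ) (c : κ → ℝ) (q : κ → Quaternion ℝ) (l : Fin 4) :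
    qcomp l (∑ s ∈ T, c s • q s) = ∑ s ∈ T, c s * qcomp l (q s) := by
  have := map_sum (qcompₗ l) (fun s => c s • q s) T
  simp only [map_smul, smul_eq_mul] at this
  exact this

theorem Quaternion.eq_zero_of_sq_im_le_of_re_eq_zero {q : Quaternion ℝ}
    (hq : q.imI ^ 2 + q.imJ ^ 2 + q.imK ^ 2 ≤ q.re ^ 2) (hre : q.re = 0) : q = 0 := by
  rw [hre] at hq
  ext <;> simp only [Quaternion.re_zero, Quaternion.imI_zero, Quaternion.imJ_zero,
    Quaternion.imK_zero, hre] <;> nlinarith [sq_nonneg q.imI, sq_nonneg q.imJ, sq_nonneg q.imK]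

section SeparableQuaternionMatrix

variable {m n r : ℕ} {M : Fin m → Fin n → Quaternion ℝ} {K : Fin r → Fin n} {H : Fin r → Fin n → ℝ}
  {X : Matrix (Fin 4 × Fin m) (Fin n) ℝ}

theorem col_eq_sum_smul_of_separable (hfac : ∀ i j, M i j = ∑ s, H s j • M i (K s))
    (hX : ∀ l i j, X (l, i) j = qcomp l (M i j)) (j : Fin n) :
    X.col j = ∑ s, H s j • X.col (K s) := by
  funext ⟨l, i⟩
  simp only [Matrix.col_apply, Finset.sum_apply, Pi.smul_apply, smul_eq_mul, hX, hfac i j,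
    qcomp_sum_smul]

theorem sum_abs_re_eq_sum_mul_of_separable (hre : ∀ i j, 0 ≤ (M i j).re)
    (hfac : ∀ i j, M i j = ∑ s, H s j • M i (K s)) (j : Fin n) :
    ∑ i, |(M i j).re| = ∑ s, H s j * ∑ i, |(M i (K s)).re| := by
  simp only [abs_of_nonneg (hre _ _), Finset.mul_sum]
  rw [Finset.sum_comm]
  refine Finset.sum_congr rfl fun i _ => ?_
  change qcomp 0 (M i j) = ∑ s, H s j * qcomp 0 (M i (K s))
  rw [hfac i j, qcomp_sum_smul]

theorem eq_zero_of_sum_abs_re_eq_zero (hS : ∀ i j, 0 ≤ (M i j).re ∧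
      (M i j).imI ^ 2 + (M i j).imJ ^ 2 + (M i j).imK ^ 2 ≤ (M i j).re ^ 2)
    {j : Fin n} (h : ∑ i, |(M i j).re| = 0) (i : Fin m) : M i j = 0 :=
  Quaternion.eq_zero_of_sq_im_le_of_re_eq_zero (hS i j).2 <| abs_eq_zero.1 <|
    (Finset.sum_eq_zero_iff_of_nonneg fun _ _ => abs_nonneg _).1 h i (Finset.mem_univ i)

theorem exists_mixture_of_separable (hS : ∀ i j, 0 ≤ (M i j).re ∧
      (M i j).imI ^ 2 + (M i j).imJ ^ 2 + (M i j).imK ^ 2 ≤ (M i j).re ^ 2)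
    (hH : ∀ s j, 0 ≤ H s j) (hfac : ∀ i j, M i j = ∑ s, H s j • M i (K s))
    (hX : ∀ l i j, X (l, i) j = qcomp l (M i j)) (hrank : X.rank = r)
    {Mn : Fin n → (Fin 4 × Fin m → ℝ)}
    (hMn : ∀ j p, Mn j p = qcomp p.1 (M p.2 j) / (∑ i, |(M i j).re|)) :
    ∃ θ : Fin n → Fin r → ℝ, (∀ j s, 0 ≤ θ j s) ∧ (∀ j, ∑ s, θ j s ≤ 1) ∧
      (∀ j, Mn j = ∑ s, θ j s • Mn (K s)) ∧ LinearIndependent ℝ (Mn ∘ K) := by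
  set N : Fin n → ℝ := fun j => ∑ i, |(M i j).re|
  have hN : ∀ j, N j = ∑ s, H s j * N (K s) :=
    sum_abs_re_eq_sum_mul_of_separable (fun i j => (hS i j).1) hfac
  have hcol := col_eq_sum_smul_of_separable hfac hX
  have hli : LinearIndependent ℝ (X.col ∘ K) :=
    LinearIndependent.comp_of_finrank_span_eq
      (fun j => hcol j ▸ Submodule.sum_mem _ fun s _ =>
        Submodule.smul_mem _ _ (Submodule.subset_span ⟨s, rfl⟩))
      (by rw [← Matrix.rank_eq_finrank_span_cols, hrank, Fintype.card_fin])
  have hN0 : ∀ j, 0 ≤ N j := fun j => Finset.sum_nonneg fun _ _ => abs_nonneg _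
  have hNK : ∀ s, N (K s) ≠ 0 := fun s h => hli.ne_zero s <| funext fun ⟨l, i⟩ => by
    rw [Function.comp_apply, Matrix.col_apply, hX, eq_zero_of_sum_abs_re_eq_zero hS h i]
    exact map_zero (qcompₗ l)
  have hMn' : ∀ j, Mn j = (N j)⁻¹ • X.col j := fun j => funext fun ⟨l, i⟩ => by
    rw [hMn, div_eq_inv_mul, Pi.smul_apply, smul_eq_mul, Matrix.col_apply, hX]
  refine ⟨fun j s => (N j)⁻¹ * H s j * N (K s),
    fun j s => mul_nonneg (mul_nonneg (inv_nonneg.2 (hN0 j)) (hH s j)) (hN0 (K s)), fun j => ?_,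
    fun j => by simpa only [hMn'] using inv_smul_eq_sum_smul_inv_smul hcol hNK j, ?_⟩
  · simp only [mul_assoc, ← Finset.mul_sum, ← hN]
    rcases eq_or_ne (N j) 0 with h | h
    · simp [h]
    · rw [inv_mul_cancel₀ h]
  · convert hli.units_smul fun s => Units.mk0 _ (inv_ne_zero (hNK s)) using 1
    funext s
    simp [hMn']

end SeparableQuaternionMatrix

theorem stmt14_general (m n r : ℕ) (M : Fin m → Fin n → Quaternion ℝ)
    (hS : ∀ i j, 0 ≤ (M i j).re ∧
      (M i j).imI ^ 2 + (M i j).imJ ^ 2 + (M i j).imK ^ 2 ≤ (M i j).re ^ 2)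
    (K : Fin r → Fin n)
    (H : Fin r → Fin n → ℝ) (hH : ∀ s j, 0 ≤ H s j)
    (hfac : ∀ i j, M i j = ∑ s, H s j • M i (K s))
    (X : Matrix (Fin 4 × Fin m) (Fin n) ℝ)
    (hX : ∀ l i j, X (l, i) j = qcomp l (M i j))
    (hrank : X.rank = r)
    -- the normalized data matrix
    (Mn : Fin n → (Fin 4 × Fin m → ℝ))
    (hMn : ∀ j p, Mn j p = qcomp p.1 (M p.2 j) / (∑ i, |(M i j).re|))
    -- a trace of the algorithm: residual matrices `Z` and chosen indices `k`
    (Z : Fin (r + 1) → Fin n → (Fin 4 × Fin m → ℝ)) (k : Fin r → Fin n)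
    (hZ0 : Z 0 = Mn)
    (hargmax : ∀ (s : Fin r) (j : Fin n),
      (∑ a, (Z s.castSucc j a) ^ 2) ≤ ∑ a, (Z s.castSucc (k s) a) ^ 2)
    (hproj : ∀ (s : Fin r) (j : Fin n) (a : Fin 4 × Fin m),
      Z s.succ j a = Z s.castSucc j a -
        ((∑ b, Z s.castSucc (k s) b * Z s.castSucc j b) /
          (∑ b, (Z s.castSucc (k s) b) ^ 2)) * Z s.castSucc (k s) a) :
    (∃ σ : Fin r → Fin r, Function.Bijective σ ∧ ∀ s : Fin r, Mn (k s) = Mn (K (σ s))) ∧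
    Z (Fin.last r) = 0 := by
  obtain ⟨θ, hθ, hθ1, hmix, hli⟩ := exists_mixture_of_separable hS hH hfac hX hrank hMn
  set z : Fin (r + 1) → Fin n → EuclideanSpace ℝ (Fin 4 × Fin m) :=
    fun t j => WithLp.toLp 2 (Z t j)
  have hz0 : ∀ j, z 0 j = ∑ s, θ j s • z 0 (K s) := fun j => by
    simp only [z, hZ0, hmix j, WithLp.toLp_sum, WithLp.toLp_smul]
  have hliz : LinearIndependent ℝ (z 0 ∘ K) := by
    simp only [z, hZ0]
    exact hli.map' (WithLp.linearEquiv 2 ℝ _).symm.toLinearMap (LinearEquiv.ker _)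
  have hmax : ∀ t j, ‖z t.castSucc j‖ ≤ ‖z t.castSucc (k t)‖ := fun t j => by
    rw [← sq_le_sq₀ (norm_nonneg _) (norm_nonneg _)]
    simpa [z, EuclideanSpace.real_norm_sq_eq] using hargmax t j
  have hstep : ∀ t j, z t.succ j = (ℝ ∙ z t.castSucc (k t))ᗮ.starProjection (z t.castSucc j) :=
    fun t j => by
      rw [EuclideanSpace.starProjection_orthogonal_singleton_toLp]
      exact congrArg (WithLp.toLp 2) (funext (hproj t j))
  obtain ⟨⟨σ, hσ, hθσ⟩, hlast⟩ := spa_correct hθ hθ1 hz0 hliz hmax hstep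
  refine ⟨⟨σ, hσ, fun t => ?_⟩, funext fun j => ?_⟩
  · rw [hmix (k t), hθσ t]
    simp [Pi.single_apply]
  · exact WithLp.toLp_injective 2 (congrFun hlast j)

/-- correctness of quaternion SPA, noiseless case: Let
`M ∈ ℍ_S^{m×n}` be `r`-separable, `M = M(:,K)[I_r, U]Π` with nonnegative mixing
weights and `rank(mat M) = r`.  Run quaternion SPA: normalize every column by the
ℓ1 norm of its real component, then `r` times pick a column of largest ℓ2 norm (in
`ℝ^{4m}`) and project all columns onto the orthogonal complement of the chosen one.
Then every chosen column coincides (after normalization) with a pure column, the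
correspondence `s ↦ σ s` with `K` is a bijection (so `K` is identified up to ties
among duplicated pure columns), and the residual matrix after `r` steps is zero. -/
theorem stmt14 (m n r : ℕ) (M : Fin m → Fin n → Quaternion ℝ)
    (hS : ∀ i j, 0 ≤ (M i j).re ∧
      (M i j).imI ^ 2 + (M i j).imJ ^ 2 + (M i j).imK ^ 2 ≤ (M i j).re ^ 2)
    (K : Fin r → Fin n) (hK : Function.Injective K)
    (H : Fin r → Fin n → ℝ) (hH : ∀ s j, 0 ≤ H s j)
    (hfac : ∀ i j, M i j = ∑ s, H s j • M i (K s))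
    (hpure : ∀ s s' : Fin r, H s (K s') = if s = s' then 1 else 0)
    (X : Matrix (Fin 4 × Fin m) (Fin n) ℝ)
    (hX : ∀ l i j, X (l, i) j = qcomp l (M i j))
    (hrank : X.rank = r)
    -- the normalized data matrix
    (Mn : Fin n → (Fin 4 × Fin m → ℝ))
    (hMn : ∀ j p, Mn j p = qcomp p.1 (M p.2 j) / (∑ i, |(M i j).re|))
    -- a trace of the algorithm: residual matrices `Z` and chosen indices `k`
    (Z : Fin (r + 1) → Fin n → (Fin 4 × Fin m → ℝ)) (k : Fin r → Fin n)
    (hZ0 : Z 0 = Mn)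
    (hargmax : ∀ (s : Fin r) (j : Fin n),
      (∑ a, (Z s.castSucc j a) ^ 2) ≤ ∑ a, (Z s.castSucc (k s) a) ^ 2)
    (hproj : ∀ (s : Fin r) (j : Fin n) (a : Fin 4 × Fin m),
      Z s.succ j a = Z s.castSucc j a -
        ((∑ b, Z s.castSucc (k s) b * Z s.castSucc j b) /
          (∑ b, (Z s.castSucc (k s) b) ^ 2)) * Z s.castSucc (k s) a) :
    (∃ σ : Fin r → Fin r, Function.Bijective σ ∧ ∀ s : Fin r, Mn (k s) = Mn (K (σ s))) ∧
    Z (Fin.last r) = 0 :=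
  stmt14_general m n r M hS K H hH hfac X hX hrank Mn hMn Z k hZ0 hargmax hproj
end

section
/- There exists a 4-separable quaternion matrix M ∈ ℍ_S^{3×5} with rank(mat(M)) = 3 and M = M(:,{1,2,3,4}) H for which the nonnegative factor H ∈ ℝ^{4×5}₊ is not unique up to permutation and scaling: both H₁ with last column (0.1, 0.4, 0.4, 0)ᵀ and H₂ with last column (0.3, 0.2, 0.2, 0.4)ᵀ (and identity on the first four columns) satisfy M = M(:,{1,2,3,4}) H_i. Equivalently: there exist four vectors y₁, y₂, y₃, y₄ ∈ ℝ^{12} spanning a 3-dimensional subspace, with first-block nonnegativity, such that some vector has two distinct nonnegative representations in terms of y₁,…,y₄. -/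
open scoped BigOperators

/-! The first four columns `a₀, a₁, a₂, a₃` of the real matrix `A` below span the cone over a
square: in the chart `(x/z, y/z)` they are the vertices `(0,0), (1,0), (0,1), (1,1)`. Being four
vectors in `ℝ³` they satisfy a linear relation, here `a₀ - a₁ - a₂ + 2a₃ = 0`, whose coefficients
have both signs; moving the representation `a₄ = 0.1a₀ + 0.4a₁ + 0.4a₂` along it gives a second
nonnegative representation. Each of `a₀, …, a₃` is an extreme ray of the cone (some linear
functional is negative on it and nonnegative on every other column), so every nonnegative
factorization uses all four of them. Embedding `A` as real quaternions changes neither the rank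
of the stacked real matrix nor the factorizations. -/

open Matrix

section General

variable {m n κ R : Type*}

theorem Matrix.rank_eq_of_apply_eq_ite_zero {ι : Type*} [Fintype ι] [Fintype m] [Fintype n]
    [DecidableEq ι] [CommSemiring R] [StrongRankCondition R] (A : Matrix m n R) (l₀ : ι)
    (X : Matrix (ι × m) n R) (hX : ∀ l i j, X (l, i) j = if l = l₀ then A i j else 0) :
    X.rank = A.rank := by
  classical
  apply le_antisymm
  · have hX_eq : X = diagonal (fun p : ι × m => if p.1 = l₀ then (1 : R) else 0) *
        A.submatrix (Prod.snd : ι × m → m) id := by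
      refine Matrix.ext fun ⟨l, i⟩ j => ?_
      simp only [diagonal_mul, hX, submatrix_apply, id]
      split_ifs <;> simp
    rw [hX_eq]
    exact (rank_mul_le_right _ _).trans (rank_submatrix_le _ _ _)
  · calc A.rank = (X.submatrix (fun i => (l₀, i)) id).rank := by
          congr 1; exact Matrix.ext fun i j => by simp [hX]
      _ ≤ X.rank := rank_submatrix_le _ _ _

theorem Quaternion.coe_eq_sum_smul_coe_iff [Fintype κ] [CommRing R] (A : Matrix m n R)
    (K : κ → n) (H : Matrix κ n R) :
    (∀ i j, (A i j : Quaternion R) = ∑ s, H s j • (A i (K s) : Quaternion R)) ↔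
      A = A.submatrix id K * H := by
  simp only [Quaternion.smul_coe]
  simp only [← Quaternion.algebraMap_def, ← map_sum, Quaternion.algebraMap_injective.eq_iff]
  rw [← Matrix.ext_iff]
  simp only [mul_apply, submatrix_apply, id, mul_comm (H _ _)]

theorem Matrix.mem_range_of_nonneg_factorization [Fintype m] [Fintype κ] [Semiring R]
    [PartialOrder R] [IsOrderedRing R] {A : Matrix m n R} {K : κ → n} {H : Matrix κ n R}
    (hH : ∀ s j, 0 ≤ H s j) (hA : A = A.submatrix id K * H) {w : m → R} {t : n}
    (ht : (w ᵥ* A) t < 0) (hw : ∀ j ≠ t, 0 ≤ (w ᵥ* A) j) : t ∈ Set.range K := by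
  by_contra hK
  have hcomb : (w ᵥ* A) t = ∑ s, (w ᵥ* A) (K s) * H s t := by
    conv_lhs => rw [hA, ← vecMul_vecMul]
    rfl
  refine (lt_irrefl (0 : R)) (lt_of_le_of_lt ?_ ht)
  rw [hcomb]
  exact Finset.sum_nonneg fun s _ =>
    mul_nonneg (hw _ fun h => hK ⟨s, h⟩) (hH s t)

theorem Matrix.card_le_of_nonneg_factorization [Fintype m] [Fintype κ] [Semiring R]
    [PartialOrder R] [IsOrderedRing R] {A : Matrix m n R} {K : κ → n} {H : Matrix κ n R}
    (hH : ∀ s j, 0 ≤ H s j) (hA : A = A.submatrix id K * H) {T : Finset n}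
    (hT : ∀ t ∈ T, ∃ w : m → R, (w ᵥ* A) t < 0 ∧ ∀ j ≠ t, 0 ≤ (w ᵥ* A) j) :
    T.card ≤ Fintype.card κ := by
  classical
  have hsub : T ⊆ Finset.univ.image K := fun t ht => by
    obtain ⟨w, hwt, hw⟩ := hT t ht
    obtain ⟨s, rfl⟩ := mem_range_of_nonneg_factorization hH hA hwt hw
    exact Finset.mem_image_of_mem K (Finset.mem_univ s)
  exact (Finset.card_le_card hsub).trans Finset.card_image_le

theorem Matrix.mul_add_vecMulVec_of_mulVec_eq_zero [Fintype κ] [Semiring R] (B : Matrix m κ R)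
    (H : Matrix κ n R) {v : κ → R} (hv : B *ᵥ v = 0) (u : n → R) :
    B * (H + vecMulVec v u) = B * H := by
  rw [Matrix.mul_add, mul_vecMulVec, hv, zero_vecMulVec, add_zero]

end General

namespace SeparableNonunique

def A : Matrix (Fin 3) (Fin 5) ℝ :=
  !![10, 10, 10, 5, 9;
      0, 10,  0, 5, 4;
      0,  0, 10, 5, 4]

def H₁ : Matrix (Fin 4) (Fin 5) ℝ :=
  !![1, 0, 0, 0, 0.1;
     0, 1, 0, 0, 0.4;
     0, 0, 1, 0, 0.4;
     0, 0, 0, 1, 0]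

def kernelVec : Fin 4 → ℝ := ![0.2, -0.2, -0.2, 0.4]

def H₂ : Matrix (Fin 4) (Fin 5) ℝ := H₁ + vecMulVec kernelVec (Pi.single 4 1)

theorem A_nonneg (i : Fin 3) (j : Fin 5) : 0 ≤ A i j := by
  fin_cases i <;> fin_cases j <;> norm_num [A]

theorem rank_A : A.rank = 3 := by
  have hdet : (A.submatrix id ![0, 1, 2]).det ≠ 0 := by
    simp [det_fin_three, A]
  apply le_antisymm (rank_le_height A)
  simpa [rank_of_det_ne_zero hdet] using rank_submatrix_le A id ![0, 1, 2]

theorem A_eq_mul_H₁ : A = A.submatrix id Fin.castSucc * H₁ := by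
  refine Matrix.ext fun i j => ?_
  fin_cases i <;> fin_cases j <;> simp [A, H₁, mul_apply, Fin.sum_univ_four] <;> norm_num

theorem mulVec_kernelVec : A.submatrix id Fin.castSucc *ᵥ kernelVec = 0 := by
  ext i
  fin_cases i <;> simp [A, kernelVec, mulVec, dotProduct, Fin.sum_univ_four] <;> norm_num

theorem A_eq_mul_H₂ : A = A.submatrix id Fin.castSucc * H₂ := by
  rw [H₂, mul_add_vecMulVec_of_mulVec_eq_zero _ _ mulVec_kernelVec, ← A_eq_mul_H₁]

def separator : Fin 4 → Fin 3 → ℝ :=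
  ![![-1, 2, 2], ![1, -2, 2], ![1, 2, -2], ![3, -2, -2]]

theorem exists_separating_functional (t : Fin 4) :
    ∃ w : Fin 3 → ℝ, (w ᵥ* A) t.castSucc < 0 ∧ ∀ j ≠ t.castSucc, 0 ≤ (w ᵥ* A) j := by
  refine ⟨separator t, ?_, fun j hj => ?_⟩
  · fin_cases t <;> simp [separator, A, vecMul, dotProduct, Fin.sum_univ_three]
    norm_num
  · fin_cases t <;> fin_cases j <;>
      simp [separator, A, vecMul, dotProduct, Fin.sum_univ_three] at hj ⊢ <;> norm_num

theorem H₁_nonneg (s : Fin 4) (j : Fin 5) : 0 ≤ H₁ s j := by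
  fin_cases s <;> fin_cases j <;> simp [H₁] <;> norm_num

theorem H₂_nonneg (s : Fin 4) (j : Fin 5) : 0 ≤ H₂ s j := by
  fin_cases s <;> fin_cases j <;> simp [H₂, H₁, kernelVec, vecMulVec] <;> norm_num

theorem H₁_castSucc (s s' : Fin 4) : H₁ s s'.castSucc = if s = s' then 1 else 0 := by
  fin_cases s <;> fin_cases s' <;> simp [H₁]

theorem H₂_castSucc (s s' : Fin 4) : H₂ s s'.castSucc = H₁ s s'.castSucc := by
  fin_cases s' <;> simp [H₂, vecMulVec]

theorem H₂_apply_last : H₂ 0 4 = 0.3 ∧ H₂ 1 4 = 0.2 ∧ H₂ 2 4 = 0.2 ∧ H₂ 3 4 = 0.4 := by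
  simp [H₂, H₁, kernelVec, vecMulVec]
  norm_num

theorem H₁_ne_H₂ : H₁ ≠ H₂ := fun h => by
  have h34 := congrFun (congrFun h 3) 4
  simp [H₁, H₂_apply_last.2.2.2] at h34
  norm_num at h34

end SeparableNonunique

open SeparableNonunique in
/-- There exists a 4-separable quaternion matrix `M ∈ ℍ_S^{3×5}` with
`rank(mat M) = 3` and `M = M(:,{1,2,3,4}) H` for which the nonnegative factor `H`
is not unique up to permutation and scaling: both `H₁` with last column
`(0.1, 0.4, 0.4, 0)ᵀ` and `H₂` with last column `(0.3, 0.2, 0.2, 0.4)ᵀ` (and the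
identity on the first four columns) satisfy `M = M(:,{1,2,3,4}) H_i`.  (4-separable
means that no factorization using only 3 columns of `M` exists.) -/
theorem stmt18 :
    ∃ M : Fin 3 → Fin 5 → Quaternion ℝ,
      (∀ i j, 0 ≤ (M i j).re ∧
        (M i j).imI ^ 2 + (M i j).imJ ^ 2 + (M i j).imK ^ 2 ≤ (M i j).re ^ 2) ∧
      (∀ X : Matrix (Fin 4 × Fin 3) (Fin 5) ℝ,
        (∀ l i j, X (l, i) j = qcomp l (M i j)) → X.rank = 3) ∧
      -- minimality: no separable factorization with only 3 columns
      (¬ ∃ (K : Fin 3 → Fin 5) (H : Fin 3 → Fin 5 → ℝ),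
        (∀ s j, 0 ≤ H s j) ∧ ∀ i j, M i j = ∑ s, H s j • M i (K s)) ∧
      ∃ H₁ H₂ : Fin 4 → Fin 5 → ℝ,
        H₁ ≠ H₂ ∧
        (∀ s j, 0 ≤ H₁ s j) ∧ (∀ s j, 0 ≤ H₂ s j) ∧
        (∀ s s' : Fin 4, H₁ s (Fin.castSucc s') = if s = s' then 1 else 0) ∧
        (∀ s s' : Fin 4, H₂ s (Fin.castSucc s') = if s = s' then 1 else 0) ∧
        (H₁ 0 4 = 0.1 ∧ H₁ 1 4 = 0.4 ∧ H₁ 2 4 = 0.4 ∧ H₁ 3 4 = 0) ∧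
        (H₂ 0 4 = 0.3 ∧ H₂ 1 4 = 0.2 ∧ H₂ 2 4 = 0.2 ∧ H₂ 3 4 = 0.4) ∧
        (∀ i j, M i j = ∑ s, H₁ s j • M i (Fin.castSucc s)) ∧
        (∀ i j, M i j = ∑ s, H₂ s j • M i (Fin.castSucc s)) := by
  refine ⟨fun i j => (A i j : Quaternion ℝ), fun i j => ?_, fun X hX => ?_, ?_,
    H₁, H₂, H₁_ne_H₂, H₁_nonneg, H₂_nonneg, H₁_castSucc, fun s s' => ?_, ⟨rfl, rfl, rfl, rfl⟩,
    H₂_apply_last, (Quaternion.coe_eq_sum_smul_coe_iff _ _ _).2 A_eq_mul_H₁,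
    (Quaternion.coe_eq_sum_smul_coe_iff _ _ _).2 A_eq_mul_H₂⟩
  · simpa using ⟨A_nonneg i j, sq_nonneg (A i j)⟩
  · refine (rank_eq_of_apply_eq_ite_zero A 0 X fun l i j => ?_).trans rank_A
    fin_cases l <;> simp [hX, qcomp]
  · rintro ⟨K, H, hH, hfac⟩
    have hcard := card_le_of_nonneg_factorization (T := Finset.univ.map Fin.castSuccEmb) hH
      ((Quaternion.coe_eq_sum_smul_coe_iff _ _ _).1 hfac)
      (by simpa using exists_separating_functional)
    simp at hcard
  · rw [H₂_castSucc, H₁_castSucc]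
end
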